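/- arXiv:1502.03840 — 2 statements merged into one kernel-verified Lean document; each statement's English description precedes it below -/
import Mathlib

section
/- Assume in addition that r is differentiable on (0, +∞). Then there exists v̄ > 0 such that the operational profit Π is strictly increasing on (v̄, +∞). -/
/-!
Write `x = κ v`. The first-order condition determines `α₂ r(v)` as an explicit function `markup x`
of `x` alone, so `v = x * exp (markup x) = kappaInv x` and `α₂ Π(v) = 1 / profitDenom x`.
`profitDenom` is a sum of terms decreasing in `x`, and `kappaInv` has positive derivative, so
`κ` is strictly increasing in `v` and `Π` is strictly increasing on all of `(0, ∞)`.
-/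

open Real Set

noncomputable def markup (β₁ q₀ C x : ℝ) : ℝ :=
  ((q₀ + x) ^ β₁ + C) * (q₀ + x) / (β₁ * C * x + q₀ * ((q₀ + x) ^ β₁ + C))

noncomputable def kappaInv (β₁ q₀ C x : ℝ) : ℝ := x * exp (markup β₁ q₀ C x)

/-- In the paper's notation this is `β₁ (1 - η) / η + P₀ / ((1 - P₀) η)`. -/
noncomputable def profitDenom (β₁ q₀ C x : ℝ) : ℝ :=
  β₁ * C / (q₀ + x) ^ β₁ + q₀ / x * (1 + C / (q₀ + x) ^ β₁)

section FirstOrderCondition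

variable {α₂ β₁ q₀ C x ρ η P₀ : ℝ}

lemma mul_eq_markup_of_foc (hβ₁ : 0 ≤ β₁) (hq₀ : 0 < q₀) (hC : 0 ≤ C) (hx : 0 < x)
    (hη : η = (q₀ + x) ^ β₁ / ((q₀ + x) ^ β₁ + C)) (hP₀ : P₀ = q₀ / (q₀ + x))
    (hfoc : α₂ * β₁ * ρ * (1 - η) * (1 - P₀) + α₂ * ρ * P₀ = 1) :
    α₂ * ρ = markup β₁ q₀ C x := by
  have hS : 0 < (q₀ + x) ^ β₁ := by positivity
  have hD : 0 < β₁ * C * x + q₀ * ((q₀ + x) ^ β₁ + C) := by positivity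
  subst hη hP₀
  rw [markup, eq_div_iff hD.ne']
  field_simp at hfoc
  linear_combination hfoc

lemma profit_eq_inv_profitDenom (hq₀ : 0 < q₀) (hC : 0 ≤ C) (hx : 0 < x)
    (hη : η = (q₀ + x) ^ β₁ / ((q₀ + x) ^ β₁ + C)) (hP₀ : P₀ = q₀ / (q₀ + x))
    (hfoc : α₂ * β₁ * ρ * (1 - η) * (1 - P₀) + α₂ * ρ * P₀ = 1) :
    ρ * η * (1 - P₀) = (α₂ * profitDenom β₁ q₀ C x)⁻¹ := by
  have hS : 0 < (q₀ + x) ^ β₁ := by positivity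
  refine eq_inv_of_mul_eq_one_left ?_
  subst hη hP₀
  unfold profitDenom
  field_simp at hfoc ⊢
  linear_combination x * hfoc

end FirstOrderCondition

section Monotonicity

variable {β₁ q₀ C x : ℝ}

lemma profitDenom_pos (hβ₁ : 0 ≤ β₁) (hq₀ : 0 < q₀) (hC : 0 ≤ C) (hx : 0 < x) :
    0 < profitDenom β₁ q₀ C x := by
  unfold profitDenom
  positivity

lemma strictAntiOn_profitDenom (hβ₁ : 0 ≤ β₁) (hq₀ : 0 < q₀) (hC : 0 ≤ C) :
    StrictAntiOn (profitDenom β₁ q₀ C) (Ioi 0) := by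
  intro x₁ (hx₁ : 0 < x₁) x₂ (hx₂ : 0 < x₂) hlt
  have hS₁ : 0 < (q₀ + x₁) ^ β₁ := by positivity
  have hS : (q₀ + x₁) ^ β₁ ≤ (q₀ + x₂) ^ β₁ := by gcongr
  apply add_lt_add_of_le_of_lt
  · gcongr
  · apply mul_lt_mul_of_lt_of_le_of_nonneg_of_pos
    all_goals first | gcongr | positivity

lemma hasDerivAt_rpow_add (hx : 0 < q₀ + x) :
    HasDerivAt (fun y => (q₀ + y) ^ β₁) (β₁ * (q₀ + x) ^ β₁ / (q₀ + x)) x := by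
  refine (((hasDerivAt_id' x).const_add q₀).rpow_const (Or.inl hx.ne')).congr_deriv ?_
  rw [rpow_sub_one hx.ne']
  ring

lemma exists_hasDerivAt_markup (hβ₁ : 0 ≤ β₁) (hq₀ : 0 < q₀) (hC : 0 ≤ C) (hx : 0 < x) :
    ∃ g', HasDerivAt (markup β₁ q₀ C) g' x ∧ 0 < 1 + x * g' := by
  have hqx : 0 < q₀ + x := by linarith
  have hrpow := hasDerivAt_rpow_add (β₁ := β₁) hqx
  have hS : 0 < (q₀ + x) ^ β₁ := by positivity
  have hN : HasDerivAt (fun y => ((q₀ + y) ^ β₁ + C) * (q₀ + y))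
      ((β₁ + 1) * (q₀ + x) ^ β₁ + C) x := by
    refine ((hrpow.add_const C).mul ((hasDerivAt_id' x).const_add q₀)).congr_deriv ?_
    field_simp
    ring
  have hD : HasDerivAt (fun y => β₁ * C * y + q₀ * ((q₀ + y) ^ β₁ + C))
      (β₁ * C + q₀ * (β₁ * (q₀ + x) ^ β₁ / (q₀ + x))) x :=
    (((hasDerivAt_id' x).const_mul (β₁ * C)).add
      ((hrpow.add_const C).const_mul q₀)).congr_deriv (by ring)
  have hDpos : 0 < β₁ * C * x + q₀ * ((q₀ + x) ^ β₁ + C) := by positivity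
  refine ⟨_, hN.div hD hDpos.ne', ?_⟩
  -- With `N / D = markup`, the numerator `D² + x (N' D - N D')` of `1 + x g'` is a polynomial
  -- in `x, q₀, C, β₁, (q₀ + x) ^ β₁` with nonnegative coefficients: the negative terms of
  -- `N' D - N D'` are cancelled by the cross terms of `D²`.
  field_simp
  ring_nf
  positivity

lemma strictMonoOn_kappaInv (hβ₁ : 0 ≤ β₁) (hq₀ : 0 < q₀) (hC : 0 ≤ C) :
    StrictMonoOn (kappaInv β₁ q₀ C) (Ioi 0) := by
  have hderiv : ∀ x ∈ Ioi (0 : ℝ), ∃ d, 0 < d ∧ HasDerivAt (kappaInv β₁ q₀ C) d x := by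
    intro x (hx : 0 < x)
    obtain ⟨g', hg', hpos⟩ := exists_hasDerivAt_markup hβ₁ hq₀ hC hx
    refine ⟨_, ?_, (hasDerivAt_id' x).mul hg'.exp⟩
    exact (mul_pos (exp_pos (markup β₁ q₀ C x)) hpos).trans_eq (by ring)
  refine strictMonoOn_of_deriv_pos (convex_Ioi 0) (fun x hx => ?_) (fun x hx => ?_)
  · obtain ⟨d, -, hd⟩ := hderiv x hx
    exact hd.continuousAt.continuousWithinAt
  · rw [interior_Ioi] at hx
    obtain ⟨d, hd, hd'⟩ := hderiv x hx
    rwa [hd'.deriv]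

end Monotonicity

theorem statement_13_general
    (α₂ β₁ q₀ C : ℝ) (hα₂ : 0 < α₂) (hβ₁ : 0 < β₁) (hq₀ : 0 < q₀) (hC : 0 < C)
    (r : ℝ → ℝ)
    (κ η P₀ : ℝ → ℝ)
    (hκ : ∀ v, 0 < v → κ v = v * Real.exp (-(α₂ * r v)))
    (hη : ∀ v, 0 < v → η v = (q₀ + κ v) ^ β₁ / ((q₀ + κ v) ^ β₁ + C))
    (hP₀ : ∀ v, 0 < v → P₀ v = q₀ / (q₀ + κ v))
    (hfoc : ∀ v, 0 < v →
      α₂ * β₁ * r v * (1 - η v) * (1 - P₀ v) + α₂ * r v * P₀ v = 1)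
    (Prof : ℝ → ℝ) (hProf : ∀ v, 0 < v → Prof v = r v * η v * (1 - P₀ v)) :
    ∃ vbar > (0 : ℝ), StrictMonoOn Prof (Set.Ioi vbar) := by
  have hκ_pos : ∀ v, 0 < v → 0 < κ v := fun v hv => by
    rw [hκ v hv]
    positivity
  have hκ_inv : ∀ v, 0 < v → kappaInv β₁ q₀ C (κ v) = v := fun v hv => by
    rw [kappaInv, ← mul_eq_markup_of_foc hβ₁.le hq₀ hC.le (hκ_pos v hv) (hη v hv) (hP₀ v hv)
      (hfoc v hv), hκ v hv, mul_assoc, ← exp_add, neg_add_cancel, exp_zero, mul_one]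
  have hκ_mono : StrictMonoOn κ (Ioi 0) := fun v₁ hv₁ v₂ hv₂ hlt =>
    ((strictMonoOn_kappaInv hβ₁.le hq₀ hC.le).lt_iff_lt (hκ_pos v₁ hv₁) (hκ_pos v₂ hv₂)).mp
      (by rwa [hκ_inv v₁ hv₁, hκ_inv v₂ hv₂])
  have hProf_eq : ∀ v, 0 < v → Prof v = (α₂ * profitDenom β₁ q₀ C (κ v))⁻¹ := fun v hv => by
    rw [hProf v hv,
      profit_eq_inv_profitDenom hq₀ hC.le (hκ_pos v hv) (hη v hv) (hP₀ v hv) (hfoc v hv)]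
  suffices StrictMonoOn Prof (Ioi 0) from ⟨1, one_pos, this.mono (Ioi_subset_Ioi zero_le_one)⟩
  intro v₁ (hv₁ : 0 < v₁) v₂ (hv₂ : 0 < v₂) hlt
  rw [hProf_eq v₁ hv₁, hProf_eq v₂ hv₂]
  have := profitDenom_pos hβ₁.le hq₀ hC.le (hκ_pos v₂ hv₂)
  gcongr
  exact strictAntiOn_profitDenom hβ₁.le hq₀ hC.le (hκ_pos v₁ hv₁) (hκ_pos v₂ hv₂)
    (hκ_mono hv₁ hv₂ hlt)

theorem statement_13
    (α₂ β₁ q₀ C : ℝ) (hα₂ : 0 < α₂) (hβ₁ : 0 < β₁) (hq₀ : 0 < q₀) (hC : 0 < C)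
    (r : ℝ → ℝ) (hr : ∀ v, 0 < v → 0 < r v)
    (κ η P₀ : ℝ → ℝ)
    (hκ : ∀ v, 0 < v → κ v = v * Real.exp (-(α₂ * r v)))
    (hη : ∀ v, 0 < v → η v = (q₀ + κ v) ^ β₁ / ((q₀ + κ v) ^ β₁ + C))
    (hP₀ : ∀ v, 0 < v → P₀ v = q₀ / (q₀ + κ v))
    (hfoc : ∀ v, 0 < v →
      α₂ * β₁ * r v * (1 - η v) * (1 - P₀ v) + α₂ * r v * P₀ v = 1)
    (hdiff : DifferentiableOn ℝ r (Set.Ioi 0))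
    (Prof : ℝ → ℝ) (hProf : ∀ v, 0 < v → Prof v = r v * η v * (1 - P₀ v)) :
    ∃ vbar > (0 : ℝ), StrictMonoOn Prof (Set.Ioi vbar) :=
  statement_13_general α₂ β₁ q₀ C hα₂ hβ₁ hq₀ hC r κ η P₀ hκ hη hP₀ hfoc Prof hProf
end

section
/- Assume in addition that r is differentiable on (0, +∞), and let C₁ > 0, C₂ > 0. Define the consumer utility S_C(v) = ln((q₀ + κ(v))^β₁·C₁ + C₂). Then there exists v̄ > 0 such that S_C is strictly increasing on (v̄, +∞). -/
/-!
The first-order condition expresses `r v` as a function of `κ v` alone, so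
`v = κ v · exp (α₂ r v)` can be read off from `κ v`: the map `κ` is injective on `(0, ∞)`.
Being continuous, positive and squeezed by `0 < κ v ≤ v`, it is then strictly increasing,
and `S_C` is an increasing function of `κ`.
-/

open Filter Real Set Topology

theorem ContinuousOn.strictMonoOn_Ioi_of_injOn_of_tendsto {α δ : Type*}
    [ConditionallyCompleteLinearOrder α] [TopologicalSpace α] [OrderTopology α]
    [DenselyOrdered α] [LinearOrder δ] [TopologicalSpace δ] [OrderTopology δ]
    {f : α → δ} {a : α} {c : δ} (hf : ContinuousOn f (Ioi a)) (hinj : InjOn f (Ioi a))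
    (hlim : Tendsto f (𝓝[>] a) (𝓝 c)) (hc : ∀ x ∈ Ioi a, c < f x) :
    StrictMonoOn f (Ioi a) := by
  intro x hx y hy hxy
  have := nhdsGT_neBot_of_exists_gt ⟨x, hx⟩
  obtain ⟨z, hfz, hz⟩ :=
    ((hlim.eventually (gt_mem_nhds (hc y hy))).and (Ioo_mem_nhdsGT (mem_Ioi.mp hx))).exists
  have hsub : Icc z y ⊆ Ioi a := fun w hw => lt_of_lt_of_le hz.1 hw.1
  exact ContinuousOn.strictMonoOn_of_injOn_Icc (hz.2.le.trans hxy.le) hfz.le (hf.mono hsub)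
    (hinj.mono hsub) ⟨hz.2.le, hxy.le⟩ ⟨hz.2.le.trans hxy.le, le_rfl⟩ hxy

theorem leftInvOn_mul_exp_of_eq_comp {κ r g : ℝ → ℝ} {s : Set ℝ} {α : ℝ}
    (hκ : ∀ v ∈ s, κ v = v * exp (-(α * r v))) (hr : ∀ v ∈ s, r v = g (κ v)) :
    LeftInvOn (fun k => k * exp (α * g k)) κ s := by
  intro v hv
  change κ v * exp (α * g (κ v)) = v
  rw [← hr v hv, hκ v hv, mul_assoc, ← exp_add, neg_add_cancel, exp_zero, mul_one]

/-- The first-order condition reads `α₂ · r v · focBracket β₁ q₀ C (κ v) = 1`. -/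
noncomputable def focBracket (β₁ q₀ C k : ℝ) : ℝ :=
  β₁ * (1 - (q₀ + k) ^ β₁ / ((q₀ + k) ^ β₁ + C)) * (1 - q₀ / (q₀ + k)) + q₀ / (q₀ + k)

theorem statement_17_general
    (α₂ β₁ q₀ C : ℝ) (hα₂ : 0 < α₂) (hβ₁ : 0 < β₁) (hq₀ : 0 < q₀)
    (r : ℝ → ℝ) (hr : ∀ v, 0 < v → 0 < r v)
    (κ η P₀ : ℝ → ℝ)
    (hκ : ∀ v, 0 < v → κ v = v * Real.exp (-(α₂ * r v)))
    (hη : ∀ v, 0 < v → η v = (q₀ + κ v) ^ β₁ / ((q₀ + κ v) ^ β₁ + C))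
    (hP₀ : ∀ v, 0 < v → P₀ v = q₀ / (q₀ + κ v))
    (hfoc : ∀ v, 0 < v →
      α₂ * β₁ * r v * (1 - η v) * (1 - P₀ v) + α₂ * r v * P₀ v = 1)
    (hdiff : DifferentiableOn ℝ r (Set.Ioi 0))
    (C₁ C₂ : ℝ) (hC₁ : 0 < C₁) (hC₂ : 0 < C₂)
    (S_C : ℝ → ℝ) (hS : ∀ v, 0 < v → S_C v = Real.log ((q₀ + κ v) ^ β₁ * C₁ + C₂)) :
    ∃ vbar > (0 : ℝ), StrictMonoOn S_C (Set.Ioi vbar) := by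
  have hκ_pos : ∀ v ∈ Ioi (0 : ℝ), 0 < κ v := fun v hv => by
    rw [hκ v hv]; exact mul_pos hv (exp_pos _)
  have hκ_le : ∀ v ∈ Ioi (0 : ℝ), κ v ≤ v := fun v hv => by
    rw [hκ v hv]
    exact mul_le_of_le_one_right (le_of_lt hv) (exp_le_one_iff.mpr (by nlinarith [hr v hv]))
  have hr_eq : ∀ v ∈ Ioi (0 : ℝ), r v = (α₂ * focBracket β₁ q₀ C (κ v))⁻¹ := fun v hv => by
    apply eq_inv_of_mul_eq_one_left
    rw [focBracket, ← hη v hv, ← hP₀ v hv]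
    linear_combination hfoc v hv
  have hκ_cont : ContinuousOn κ (Ioi 0) := by
    have := hdiff.continuousOn
    exact ContinuousOn.congr (f := fun v => v * exp (-(α₂ * r v))) (by fun_prop) hκ
  have hκ_lim : Tendsto κ (𝓝[>] 0) (𝓝 0) :=
    tendsto_of_tendsto_of_tendsto_of_le_of_le' tendsto_const_nhds
      (tendsto_nhdsWithin_of_tendsto_nhds tendsto_id)
      (eventually_nhdsWithin_of_forall fun v hv => (hκ_pos v hv).le)
      (eventually_nhdsWithin_of_forall hκ_le)
  have hκ_mono : StrictMonoOn κ (Ioi 0) :=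
    hκ_cont.strictMonoOn_Ioi_of_injOn_of_tendsto
      (leftInvOn_mul_exp_of_eq_comp (g := fun k => (α₂ * focBracket β₁ q₀ C k)⁻¹) hκ hr_eq).injOn
      hκ_lim hκ_pos
  refine ⟨1, one_pos, fun a ha b hb hab => ?_⟩
  have ha₀ : a ∈ Ioi (0 : ℝ) := mem_Ioi.mpr (lt_trans one_pos ha)
  have hb₀ : b ∈ Ioi (0 : ℝ) := mem_Ioi.mpr (lt_trans one_pos hb)
  have hqa : 0 < q₀ + κ a := add_pos hq₀ (hκ_pos a ha₀)
  rw [hS a ha₀, hS b hb₀]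
  gcongr
  exact hκ_mono ha₀ hb₀ hab

theorem statement_17
    (α₂ β₁ q₀ C : ℝ) (hα₂ : 0 < α₂) (hβ₁ : 0 < β₁) (hq₀ : 0 < q₀) (hC : 0 < C)
    (r : ℝ → ℝ) (hr : ∀ v, 0 < v → 0 < r v)
    (κ η P₀ : ℝ → ℝ)
    (hκ : ∀ v, 0 < v → κ v = v * Real.exp (-(α₂ * r v)))
    (hη : ∀ v, 0 < v → η v = (q₀ + κ v) ^ β₁ / ((q₀ + κ v) ^ β₁ + C))
    (hP₀ : ∀ v, 0 < v → P₀ v = q₀ / (q₀ + κ v))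
    (hfoc : ∀ v, 0 < v →
      α₂ * β₁ * r v * (1 - η v) * (1 - P₀ v) + α₂ * r v * P₀ v = 1)
    (hdiff : DifferentiableOn ℝ r (Set.Ioi 0))
    (C₁ C₂ : ℝ) (hC₁ : 0 < C₁) (hC₂ : 0 < C₂)
    (S_C : ℝ → ℝ) (hS : ∀ v, 0 < v → S_C v = Real.log ((q₀ + κ v) ^ β₁ * C₁ + C₂)) :
    ∃ vbar > (0 : ℝ), StrictMonoOn S_C (Set.Ioi vbar) :=
  statement_17_general α₂ β₁ q₀ C hα₂ hβ₁ hq₀ r hr κ η P₀ hκ hη hP₀ hfoc hdiff C₁ C₂ hC₁ hC₂ S_C hS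
end
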